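/- With τ_j := (s_{d_1}∘s_{d_2}∘⋯∘s_{d_{j−1}})(α_{d_j}) (the operator s_{d_{j−1}} applied first), the ordering of the positive roots of type C induced by the canonical reduced sequence (d_k) is: τ_1 = 2λ_1, and for every n ≥ 2 and 1 ≤ k ≤ 2n−1, τ_{(n−1)²+k} = λ_n + λ_{n−k} if k < n, τ_{(n−1)²+k} = 2λ_n if k = n, and τ_{(n−1)²+k} = λ_n − λ_{k−n} if k > n. In particular the ordering is not the lexicographic one: τ_1 = 2λ_1, τ_2 = λ_2+λ_1, τ_3 = 2λ_2, τ_4 = λ_2−λ_1, τ_5 = λ_3+λ_2, τ_6 = λ_3+λ_1, τ_7 = 2λ_3, τ_8 = λ_3−λ_1, τ_9 = λ_3−λ_2, …. -/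
import Mathlib


noncomputable section

/-- The simple reflections of the type `C` Weyl group acting on the space `ℕ →₀ ℝ` of
finitely supported sequences (with basis `λ_1 = single 1 1, λ_2 = single 2 1, …`):
`s 1` sends `λ_1` to `−λ_1` fixing `λ_i`, `i ≥ 2`; for `j ≥ 2`, `s j` exchanges the
coordinates `j` and `j − 1`. -/
def sC (j : ℕ) (f : ℕ →₀ ℝ) : ℕ →₀ ℝ :=
  if j = 1 then f - (2 * f 1) • Finsupp.single 1 (1 : ℝ)
  else Finsupp.equivMapDomain (Equiv.swap j (j - 1)) f

/-- The simple roots of type `C`: `α_1 = 2λ_1` and `α_j = λ_j − λ_{j−1}` for `j ≥ 2`. -/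
def alphaC (j : ℕ) : ℕ →₀ ℝ :=
  if j = 1 then (2 : ℝ) • Finsupp.single 1 (1 : ℝ)
  else Finsupp.single j (1 : ℝ) - Finsupp.single (j - 1) (1 : ℝ)

/-- `compC d j = s_{d 1} ∘ s_{d 2} ∘ ⋯ ∘ s_{d j}` (rightmost operator applied first). -/
def compC (d : ℕ → ℕ) : ℕ → (ℕ →₀ ℝ) → (ℕ →₀ ℝ)
  | 0 => id
  | j + 1 => fun f => compC d j (sC (d (j + 1)) f)

/-- `τ_j = (s_{d_1} ∘ s_{d_2} ∘ ⋯ ∘ s_{d_{j−1}})(α_{d_j})`. -/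
def tauC (d : ℕ → ℕ) (j : ℕ) : ℕ →₀ ℝ := compC d (j - 1) (alphaC (d j))

/-- The canonical sequence `1; 2,1,2; 3,2,1,2,3; 4,3,2,1,2,3,4; …`: the block
`m, m−1, …, 2, 1, 2, …, m−1, m` occupies the indices `(m−1)² + 1, …, m²`. -/
def IsCanonSeqC (d : ℕ → ℕ) : Prop :=
  ∀ m i, 1 ≤ m → 1 ≤ i → i ≤ 2 * m - 1 → d ((m - 1) ^ 2 + i) = max (m - i) (i - m) + 1

/-! ### Auxiliary machinery -/

/-- The action of `sC j` on basis indices. -/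
def actC (j i : ℕ) : ℕ := if j = 1 then i else Equiv.swap j (j-1) i

/-- The sign produced by `sC j` on the basis vector indexed `i`. -/
def sgnC (j i : ℕ) : ℝ := if j = 1 ∧ i = 1 then -1 else 1

lemma actC_eq (j i : ℕ) : actC j i =
    if j = 1 then i else if i = j then j-1 else if i = j-1 then j else i := by
  unfold actC
  by_cases h : j = 1
  · simp [h]
  · simp only [h, if_neg, if_false]
    rw [Equiv.swap_apply_def]

lemma actC_pos {j i : ℕ} (hi : 1 ≤ i) : 1 ≤ actC j i := by
  rw [actC_eq]; split_ifs <;> omega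

lemma sC_single (j i : ℕ) (c : ℝ) :
    sC j (Finsupp.single i c) = Finsupp.single (actC j i) (sgnC j i * c) := by
  unfold sC actC sgnC
  by_cases hj : j = 1
  · subst hj
    by_cases hi : i = 1
    · subst hi
      simp only [if_pos rfl, true_and, Finsupp.single_eq_same, Finsupp.smul_single,
        smul_eq_mul, mul_one, if_true, ite_true]
      rw [← Finsupp.single_sub]
      congr 1; ring
    · simp [hi, Finsupp.single_apply, Ne.symm hi]
  · simp [hj, Finsupp.equivMapDomain_single]

lemma sC_sub (j : ℕ) (f g : ℕ →₀ ℝ) : sC j (f - g) = sC j f - sC j g := by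
  unfold sC
  split_ifs with h
  · ext x
    simp [Finsupp.sub_apply, Finsupp.single_apply]
    split_ifs <;> ring
  · ext x
    simp [Finsupp.equivMapDomain_apply, Finsupp.sub_apply]

/-- Index action of `compC d r` (letters applied from index `r` down to `1`). -/
def ACT (d : ℕ → ℕ) : ℕ → ℕ → ℕ
  | 0, i => i
  | r+1, i => ACT d r (actC (d (r+1)) i)

/-- Sign action of `compC d r`. -/
def SGN (d : ℕ → ℕ) : ℕ → ℕ → ℝ
  | 0, _ => 1
  | r+1, i => SGN d r (actC (d (r+1)) i) * sgnC (d (r+1)) i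

lemma compC_single (d : ℕ → ℕ) : ∀ r i c,
    compC d r (Finsupp.single i c) = Finsupp.single (ACT d r i) (SGN d r i * c) := by
  intro r
  induction r with
  | zero => intro i c; simp [compC, ACT, SGN]
  | succ r ih =>
    intro i c
    show compC d r (sC (d (r+1)) (Finsupp.single i c)) = _
    rw [sC_single, ih]
    show _ = Finsupp.single (ACT d r (actC (d (r+1)) i))
      (SGN d r (actC (d (r+1)) i) * sgnC (d (r+1)) i * c)
    rw [mul_assoc]

lemma compC_sub (d : ℕ → ℕ) : ∀ r f g, compC d r (f - g) = compC d r f - compC d r g := by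
  intro r
  induction r with
  | zero => intro f g; rfl
  | succ r ih =>
    intro f g
    show compC d r (sC (d (r+1)) (f - g)) = _
    rw [sC_sub, ih]; rfl

/-- Index action of the first `r` letters of the `m`-th block. -/
def bact (m r i : ℕ) : ℕ :=
  if r < m then (if i + r = m then m else if m < i + r ∧ i ≤ m then i - 1 else i)
  else if i = r - m + 1 then m else if i ≤ r - m then i else if i ≤ m then i - 1 else i

/-- Sign action of the first `r` letters of the `m`-th block. -/
def bsgn (m r i : ℕ) : ℝ := if m ≤ r ∧ i = r - m + 1 then -1 else 1

set_option maxHeartbeats 1000000 in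
lemma bact_step (m r i ℓ : ℕ) (hm : 1 ≤ m) (hi : 1 ≤ i) (hr : r + 1 ≤ 2 * m - 1)
    (hl : (r + 1 ≤ m ∧ ℓ = m - (r + 1) + 1) ∨ (m < r + 1 ∧ ℓ = (r + 1) - m + 1)) :
    bact m r (if ℓ = 1 then i else if i = ℓ then ℓ - 1 else if i = ℓ - 1 then ℓ else i)
      = bact m (r + 1) i := by
  unfold bact
  split_ifs <;> omega

set_option maxHeartbeats 1000000 in
lemma bsgn_step (m r i ℓ : ℕ) (hm : 1 ≤ m) (hi : 1 ≤ i) (hr : r + 1 ≤ 2 * m - 1)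
    (hl : (r + 1 ≤ m ∧ ℓ = m - (r + 1) + 1) ∨ (m < r + 1 ∧ ℓ = (r + 1) - m + 1)) :
    bsgn m r (if ℓ = 1 then i else if i = ℓ then ℓ - 1 else if i = ℓ - 1 then ℓ else i)
      * (if ℓ = 1 ∧ i = 1 then (-1 : ℝ) else 1) = bsgn m (r + 1) i := by
  unfold bsgn
  split_ifs <;> first | (exfalso; omega) | norm_num

lemma dval {d : ℕ → ℕ} (hd : IsCanonSeqC d) {m p : ℕ} (hm : 1 ≤ m) (hp1 : 1 ≤ p)
    (hp2 : p ≤ 2 * m - 1) :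
    d ((m - 1) ^ 2 + p) = if p ≤ m then m - p + 1 else p - m + 1 := by
  rw [hd m p hm hp1 hp2]
  split_ifs <;> omega

lemma BA {d : ℕ → ℕ} (hd : IsCanonSeqC d) (m : ℕ) (hm : 1 ≤ m) :
    ∀ r, r ≤ 2 * m - 1 → ∀ i, 1 ≤ i →
    ACT d ((m - 1) ^ 2 + r) i = ACT d ((m - 1) ^ 2) (bact m r i) ∧
    SGN d ((m - 1) ^ 2 + r) i = SGN d ((m - 1) ^ 2) (bact m r i) * bsgn m r i := by
  intro r
  induction r with
  | zero =>
    intro _ i hi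
    have h1 : bact m 0 i = i := by unfold bact; split_ifs <;> omega
    have h2 : bsgn m 0 i = 1 := by unfold bsgn; split_ifs <;> [omega; rfl]
    rw [h1, h2, mul_one]
    exact ⟨rfl, rfl⟩
  | succ r ih =>
    intro hr i hi
    have hr' : r ≤ 2 * m - 1 := by omega
    have hdl : d ((m - 1) ^ 2 + (r + 1)) =
        if r + 1 ≤ m then m - (r + 1) + 1 else (r + 1) - m + 1 :=
      dval hd hm (by omega) hr
    set ℓ := d ((m - 1) ^ 2 + (r + 1)) with hℓ
    have ea : ACT d ((m - 1) ^ 2 + (r + 1)) i = ACT d ((m - 1) ^ 2 + r) (actC ℓ i) := rfl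
    have es : SGN d ((m - 1) ^ 2 + (r + 1)) i
        = SGN d ((m - 1) ^ 2 + r) (actC ℓ i) * sgnC ℓ i := rfl
    obtain ⟨iha, ihs⟩ := ih hr' (actC ℓ i) (actC_pos hi)
    have hdL : (r + 1 ≤ m ∧ ℓ = m - (r + 1) + 1) ∨ (m < r + 1 ∧ ℓ = (r + 1) - m + 1) := by
      by_cases h : r + 1 ≤ m
      · exact Or.inl ⟨h, by rw [hdl, if_pos h]⟩
      · exact Or.inr ⟨by omega, by rw [hdl, if_neg h]⟩
    have h1 : bact m r (actC ℓ i) = bact m (r + 1) i := by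
      rw [actC_eq]; exact bact_step m r i ℓ hm hi hr hdL
    have h2 : bsgn m r (actC ℓ i) * sgnC ℓ i = bsgn m (r + 1) i := by
      rw [actC_eq]; unfold sgnC; exact bsgn_step m r i ℓ hm hi hr hdL
    constructor
    · rw [ea, iha, h1]
    · rw [es, ihs, mul_assoc, h2, h1]

lemma Wlem {d : ℕ → ℕ} (hd : IsCanonSeqC d) : ∀ m, ∀ i, 1 ≤ i →
    ACT d (m ^ 2) i = i ∧ SGN d (m ^ 2) i = if i ≤ m then -1 else 1 := by
  intro m
  induction m with
  | zero =>
    intro i hi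
    refine ⟨rfl, ?_⟩
    rw [if_neg (by omega)]
    rfl
  | succ m ih =>
    intro i hi
    have e : (m + 1) ^ 2 = m ^ 2 + (2 * m + 1) := by ring
    obtain ⟨ba, bs⟩ := BA hd (m + 1) (by omega) (2 * m + 1) (by omega) i hi
    simp only [Nat.add_sub_cancel] at ba bs
    have hb : bact (m + 1) (2 * m + 1) i = i := by
      unfold bact; split_ifs <;> omega
    have hs : bsgn (m + 1) (2 * m + 1) i = if i = m + 1 then -1 else 1 := by
      unfold bsgn; split_ifs <;> first | (exfalso; omega) | rfl
    obtain ⟨ia, is⟩ := ih i hi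
    rw [hb] at ba bs
    constructor
    · rw [e, ba, ia]
    · rw [e, bs, hs, is]
      split_ifs <;> first | (exfalso; omega) | norm_num

/-- the ordering of the positive roots of type `C` induced by the canonical
reduced sequence: `τ_1 = 2λ_1` and, for `n ≥ 2` and `1 ≤ k ≤ 2n − 1`,
`τ_{(n−1)² + k} = λ_n + λ_{n−k}` if `k < n`, `= 2λ_n` if `k = n`, and `= λ_n − λ_{k−n}` if
`k > n`. -/
theorem stmt19 (d : ℕ → ℕ) (hd : IsCanonSeqC d) :
    tauC d 1 = (2 : ℝ) • Finsupp.single 1 (1 : ℝ) ∧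
    ∀ n, 2 ≤ n → ∀ k, 1 ≤ k → k ≤ 2 * n - 1 →
      tauC d ((n - 1) ^ 2 + k) =
        if k < n then Finsupp.single n (1 : ℝ) + Finsupp.single (n - k) (1 : ℝ)
        else if k = n then (2 : ℝ) • Finsupp.single n (1 : ℝ)
        else Finsupp.single n (1 : ℝ) - Finsupp.single (k - n) (1 : ℝ) := by
  constructor
  · have h1 : d 1 = 1 := by
      have := hd 1 1 le_rfl le_rfl (by omega)
      simpa using this
    simp [tauC, compC, alphaC, h1]
  · intro n hn k hk1 hk2
    have hn1 : 1 ≤ n := by omega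
    have hdk : d ((n - 1) ^ 2 + k) = if k ≤ n then n - k + 1 else k - n + 1 :=
      dval hd hn1 hk1 hk2
    have hA : (n - 1) ^ 2 + k - 1 = (n - 1) ^ 2 + (k - 1) := by omega
    unfold tauC
    rw [hA, hdk]
    rcases lt_trichotomy k n with hkn | hkn | hkn
    · -- k < n
      rw [if_pos (show k ≤ n by omega)]
      unfold alphaC
      rw [if_neg (show ¬ n - k + 1 = 1 by omega)]
      have e1 : n - k + 1 - 1 = n - k := by omega
      rw [e1, compC_sub, compC_single, compC_single]
      obtain ⟨a1, s1⟩ := BA hd n hn1 (k - 1) (by omega) (n - k + 1) (by omega)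
      obtain ⟨a2, s2⟩ := BA hd n hn1 (k - 1) (by omega) (n - k) (by omega)
      have b1 : bact n (k - 1) (n - k + 1) = n := by unfold bact; split_ifs <;> omega
      have b2 : bact n (k - 1) (n - k) = n - k := by unfold bact; split_ifs <;> omega
      have c1 : bsgn n (k - 1) (n - k + 1) = 1 := by
        unfold bsgn; split_ifs <;> first | (exfalso; omega) | rfl
      have c2 : bsgn n (k - 1) (n - k) = 1 := by
        unfold bsgn; split_ifs <;> first | (exfalso; omega) | rfl
      obtain ⟨w1a, w1s⟩ := Wlem hd (n - 1) n (by omega)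
      obtain ⟨w2a, w2s⟩ := Wlem hd (n - 1) (n - k) (by omega)
      rw [a1, a2, s1, s2, b1, b2, c1, c2, w1a, w2a, w1s, w2s]
      rw [if_neg (show ¬ n ≤ n - 1 by omega), if_pos (show n - k ≤ n - 1 by omega)]
      rw [if_pos hkn]
      norm_num [Finsupp.single_neg, sub_neg_eq_add]
    · -- k = n
      subst hkn
      rw [if_pos le_rfl]
      have e1 : k - k + 1 = 1 := by omega
      rw [e1]
      unfold alphaC
      rw [if_pos rfl]
      rw [Finsupp.smul_single, smul_eq_mul, mul_one, compC_single]
      obtain ⟨a1, s1⟩ := BA hd k (by omega) (k - 1) (by omega) 1 le_rfl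
      have b1 : bact k (k - 1) 1 = k := by unfold bact; split_ifs <;> omega
      have c1 : bsgn k (k - 1) 1 = 1 := by
        unfold bsgn; split_ifs <;> first | (exfalso; omega) | rfl
      obtain ⟨w1a, w1s⟩ := Wlem hd (k - 1) k (by omega)
      rw [a1, s1, b1, c1, w1a, w1s]
      rw [if_neg (show ¬ k ≤ k - 1 by omega)]
      rw [if_neg (show ¬ k < k by omega), if_pos rfl]
      norm_num [Finsupp.smul_single]
    · -- k > n
      rw [if_neg (show ¬ k ≤ n by omega)]
      unfold alphaC
      rw [if_neg (show ¬ k - n + 1 = 1 by omega)]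
      have e1 : k - n + 1 - 1 = k - n := by omega
      rw [e1, compC_sub, compC_single, compC_single]
      obtain ⟨a1, s1⟩ := BA hd n hn1 (k - 1) (by omega) (k - n + 1) (by omega)
      obtain ⟨a2, s2⟩ := BA hd n hn1 (k - 1) (by omega) (k - n) (by omega)
      have b1 : bact n (k - 1) (k - n + 1) = k - n := by unfold bact; split_ifs <;> omega
      have b2 : bact n (k - 1) (k - n) = n := by unfold bact; split_ifs <;> omega
      have c1 : bsgn n (k - 1) (k - n + 1) = 1 := by
        unfold bsgn; split_ifs <;> first | (exfalso; omega) | rfl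
      have c2 : bsgn n (k - 1) (k - n) = -1 := by
        unfold bsgn; split_ifs <;> first | (exfalso; omega) | rfl
      obtain ⟨w1a, w1s⟩ := Wlem hd (n - 1) (k - n) (by omega)
      obtain ⟨w2a, w2s⟩ := Wlem hd (n - 1) n (by omega)
      rw [a1, a2, s1, s2, b1, b2, c1, c2, w1a, w2a, w1s, w2s]
      rw [if_pos (show k - n ≤ n - 1 by omega), if_neg (show ¬ n ≤ n - 1 by omega)]
      rw [if_neg (show ¬ k < n by omega), if_neg (show ¬ k = n by omega)]
      norm_num [Finsupp.single_neg, sub_neg_eq_add]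
      abel
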